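/- arXiv:nlin/0606025 — 10 statements merged into one kernel-verified Lean document; each statement's English description precedes it below -/
import Mathlib

section
/- Let α, β, γ, δ, Ψ, Ψ̄ : ℤ² → ℝ be lattice functions such that for all (m,n) ∈ ℤ²: Ψ̄(m+1,n) − Ψ̄(m,n) = δ(m,n)·(Ψ(m+1,n) − Ψ(m,n)) + β(m,n)·(Ψ(m,n+1) − Ψ(m,n)) and Ψ̄(m,n+1) − Ψ̄(m,n) = −α(m,n)·(Ψ(m+1,n) − Ψ(m,n)) − γ(m,n)·(Ψ(m,n+1) − Ψ(m,n)). Then Ψ satisfies, for all (m,n) ∈ ℤ², the 6-point scheme in elementary transformable form: α(m+1,n)Ψ(m+2,n) + β(m,n+1)Ψ(m,n+2) + (γ(m+1,n)+δ(m,n+1))Ψ(m+1,n+1) − (α(m+1,n)+α(m,n)+γ(m+1,n)+δ(m,n))Ψ(m+1,n) − (β(m,n+1)+β(m,n)+γ(m,n)+δ(m,n+1))Ψ(m,n+1) + (α(m,n)+β(m,n)+γ(m,n)+δ(m,n))Ψ(m,n) = 0. -/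
/-!
Ψ̄ is a discrete potential whose two first differences are prescribed linear combinations of
those of Ψ. Around the unit square with lower-left corner (m,n) the differences of Ψ̄ telescope
to zero; substituting the prescribed differences on the four edges turns this identity into the
6-point scheme.
-/

theorem sixPoint_of_discretePotential {R : Type*} [CommRing R] (α β γ δ Ψ Ψb : ℤ → ℤ → R)
    (h1 : ∀ m n : ℤ, Ψb (m + 1) n - Ψb m n =
      δ m n * (Ψ (m + 1) n - Ψ m n) + β m n * (Ψ m (n + 1) - Ψ m n))
    (h2 : ∀ m n : ℤ, Ψb m (n + 1) - Ψb m n =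
      -α m n * (Ψ (m + 1) n - Ψ m n) - γ m n * (Ψ m (n + 1) - Ψ m n))
    (m n : ℤ) :
    α (m + 1) n * Ψ (m + 2) n + β m (n + 1) * Ψ m (n + 2)
      + (γ (m + 1) n + δ m (n + 1)) * Ψ (m + 1) (n + 1)
      - (α (m + 1) n + α m n + γ (m + 1) n + δ m n) * Ψ (m + 1) n
      - (β m (n + 1) + β m n + γ m n + δ m (n + 1)) * Ψ m (n + 1)
      + (α m n + β m n + γ m n + δ m n) * Ψ m n = 0 := by
  have bottom := h1 m n
  have left := h2 m n
  have top := h1 m (n + 1)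
  have right := h2 (m + 1) n
  rw [show n + 1 + 1 = n + 2 by ring] at top
  rw [show m + 1 + 1 = m + 2 by ring] at right
  linear_combination bottom + right - top - left

/-- compatibility of the first-order system implies the 6-point
scheme in elementary transformable form. -/
theorem six_point_elementary_transformable
    (α β γ δ Ψ Ψb : ℤ → ℤ → ℝ)
    (h1 : ∀ m n : ℤ, Ψb (m+1) n - Ψb m n =
      δ m n * (Ψ (m+1) n - Ψ m n) + β m n * (Ψ m (n+1) - Ψ m n))
    (h2 : ∀ m n : ℤ, Ψb m (n+1) - Ψb m n =
      - α m n * (Ψ (m+1) n - Ψ m n) - γ m n * (Ψ m (n+1) - Ψ m n)) :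
    ∀ m n : ℤ,
      α (m+1) n * Ψ (m+2) n + β m (n+1) * Ψ m (n+2)
      + (γ (m+1) n + δ m (n+1)) * Ψ (m+1) (n+1)
      - (α (m+1) n + α m n + γ (m+1) n + δ m n) * Ψ (m+1) n
      - (β m (n+1) + β m n + γ m n + δ m (n+1)) * Ψ m (n+1)
      + (α m n + β m n + γ m n + δ m n) * Ψ m n = 0 :=
  sixPoint_of_discretePotential α β γ δ Ψ Ψb h1 h2
end

section
/- Let A, B, C, G, H, F, Θ, Φ, P : ℤ² → ℝ be lattice functions such that Θ satisfies the 6-point scheme with coefficients (A,B,C,G,H,F), Φ satisfies the adjoint 6-point scheme, and P satisfies the P-equations for (A,B,C,G,H), Θ, Φ. Define α(m,n) := A(m−1,n)Φ(m−1,n)Θ(m+1,n), β(m,n) := B(m,n−1)Φ(m,n−1)Θ(m,n+1), γ(m,n) := (C(m−1,n) − P(m−1,n))Φ(m−1,n)Θ(m,n+1), δ(m,n) := (C(m,n−1) + P(m,n−1))Φ(m,n−1)Θ(m+1,n). Then for every lattice function X : ℤ² → ℝ and all (m,n) ∈ ℤ²: Φ(m,n)·[A(m,n)Θ(m+2,n)X(m+2,n)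 + B(m,n)Θ(m,n+2)X(m,n+2) + 2C(m,n)Θ(m+1,n+1)X(m+1,n+1) + G(m,n)Θ(m+1,n)X(m+1,n) + H(m,n)Θ(m,n+1)X(m,n+1) − F(m,n)Θ(m,n)X(m,n)] = α(m+1,n)X(m+2,n) + β(m,n+1)X(m,n+2) + (γ(m+1,n)+δ(m,n+1))X(m+1,n+1) − (α(m+1,n)+α(m,n)+γ(m+1,n)+δ(m,n))X(m+1,n) − (β(m,n+1)+β(m,n)+γ(m,n)+δ(m,n+1))X(m,n+1) + (α(m,n)+β(m,n)+γ(m,n)+δ(m,n))X(m,n). -/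
/-!
Write `L` for the six-point operator with coefficients `(A,B,C,G,H,F)`. In the gauged operator
`X ↦ Φ · L(Θ X)` the coefficients of `X(m+2,n)`, `X(m,n+2)` and `X(m+1,n+1)` are `α(m+1,n)`,
`β(m,n+1)` and `γ(m+1,n) + δ(m,n+1)` outright (the `P`-terms of `γ` and `δ` cancel). The two
`P`-equations say precisely that the coefficients of `X(m+1,n)` and `X(m,n+1)` have the required
form, and `L Θ = 0` says that the six new coefficients sum to zero, which determines the
coefficient of `X(m,n)`.
-/

/-- A function `Ψ` satisfies the 6-point scheme with coefficients `(A,B,C,G,H,F)`. -/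
def SixPointScheme (A B C G H F Ψ : ℤ → ℤ → ℝ) : Prop :=
  ∀ m n : ℤ,
    A m n * Ψ (m+2) n + B m n * Ψ m (n+2) + 2 * C m n * Ψ (m+1) (n+1)
      + G m n * Ψ (m+1) n + H m n * Ψ m (n+1) = F m n * Ψ m n

/-- A function `Φ` satisfies the adjoint 6-point scheme. -/
def AdjSixPointScheme (A B C G H F Φ : ℤ → ℤ → ℝ) : Prop :=
  ∀ m n : ℤ,
    A (m-2) n * Φ (m-2) n + B m (n-2) * Φ m (n-2) + 2 * C (m-1) (n-1) * Φ (m-1) (n-1)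
      + G (m-1) n * Φ (m-1) n + H m (n-1) * Φ m (n-1) = F m n * Φ m n

/-- `P` satisfies the P-equations for `(A,B,C,G,H)`, `Θ`, `Φ`. -/
def PEquations (A B C G H Θ Φ P : ℤ → ℤ → ℝ) : Prop :=
  (∀ m n : ℤ,
    Φ m n * Θ (m+1) (n+1) * P m n - Φ (m-1) n * Θ m (n+1) * P (m-1) n =
      -(B m (n-1) * Φ m (n-1) * Θ m (n+1) + B m n * Φ m n * Θ m (n+2)
        + C (m-1) n * Φ (m-1) n * Θ m (n+1) + C m n * Φ m n * Θ (m+1) (n+1)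
        + H m n * Φ m n * Θ m (n+1))) ∧
  (∀ m n : ℤ,
    Φ m n * Θ (m+1) (n+1) * P m n - Φ m (n-1) * Θ (m+1) n * P m (n-1) =
      A (m-1) n * Φ (m-1) n * Θ (m+1) n + A m n * Φ m n * Θ (m+2) n
        + C m (n-1) * Φ m (n-1) * Θ (m+1) n + C m n * Φ m n * Θ (m+1) (n+1)
        + G m n * Φ m n * Θ (m+1) n)

section GaugeCoefficients

variable {A B C G H F Θ Φ P α β γ δ : ℤ → ℤ → ℝ}

theorem alpha_succ_left
    (hα : ∀ m n : ℤ, α m n = A (m-1) n * Φ (m-1) n * Θ (m+1) n)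
    (m n : ℤ) : α (m+1) n = A m n * Φ m n * Θ (m+2) n := by
  rw [hα, add_sub_cancel_right, add_assoc, one_add_one_eq_two]

theorem beta_succ_right
    (hβ : ∀ m n : ℤ, β m n = B m (n-1) * Φ m (n-1) * Θ m (n+1))
    (m n : ℤ) : β m (n+1) = B m n * Φ m n * Θ m (n+2) := by
  rw [hβ, add_sub_cancel_right, add_assoc, one_add_one_eq_two]

theorem gamma_succ_left
    (hγ : ∀ m n : ℤ, γ m n = (C (m-1) n - P (m-1) n) * Φ (m-1) n * Θ m (n+1))
    (m n : ℤ) : γ (m+1) n = (C m n - P m n) * Φ m n * Θ (m+1) (n+1) := by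
  rw [hγ, add_sub_cancel_right]

theorem delta_succ_right
    (hδ : ∀ m n : ℤ, δ m n = (C m (n-1) + P m (n-1)) * Φ m (n-1) * Θ (m+1) n)
    (m n : ℤ) : δ m (n+1) = (C m n + P m n) * Φ m n * Θ (m+1) (n+1) := by
  rw [hδ, add_sub_cancel_right]

theorem gauge_coeff_right (hP : PEquations A B C G H Θ Φ P)
    (hα : ∀ m n : ℤ, α m n = A (m-1) n * Φ (m-1) n * Θ (m+1) n)
    (hγ : ∀ m n : ℤ, γ m n = (C (m-1) n - P (m-1) n) * Φ (m-1) n * Θ m (n+1))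
    (hδ : ∀ m n : ℤ, δ m n = (C m (n-1) + P m (n-1)) * Φ m (n-1) * Θ (m+1) n) (m n : ℤ) :
    Φ m n * G m n * Θ (m+1) n = -(α (m+1) n + α m n + γ (m+1) n + δ m n) := by
  rw [alpha_succ_left hα, hα m, gamma_succ_left hγ, hδ m]
  linear_combination -hP.2 m n

theorem gauge_coeff_up (hP : PEquations A B C G H Θ Φ P)
    (hβ : ∀ m n : ℤ, β m n = B m (n-1) * Φ m (n-1) * Θ m (n+1))
    (hγ : ∀ m n : ℤ, γ m n = (C (m-1) n - P (m-1) n) * Φ (m-1) n * Θ m (n+1))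
    (hδ : ∀ m n : ℤ, δ m n = (C m (n-1) + P m (n-1)) * Φ m (n-1) * Θ (m+1) n) (m n : ℤ) :
    Φ m n * H m n * Θ m (n+1) = -(β m (n+1) + β m n + γ m n + δ m (n+1)) := by
  rw [beta_succ_right hβ, hβ m, hγ m, delta_succ_right hδ]
  linear_combination hP.1 m n

theorem gauge_coeff_center (hΘ : SixPointScheme A B C G H F Θ) (hP : PEquations A B C G H Θ Φ P)
    (hα : ∀ m n : ℤ, α m n = A (m-1) n * Φ (m-1) n * Θ (m+1) n)
    (hβ : ∀ m n : ℤ, β m n = B m (n-1) * Φ m (n-1) * Θ m (n+1))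
    (hγ : ∀ m n : ℤ, γ m n = (C (m-1) n - P (m-1) n) * Φ (m-1) n * Θ m (n+1))
    (hδ : ∀ m n : ℤ, δ m n = (C m (n-1) + P m (n-1)) * Φ m (n-1) * Θ (m+1) n) (m n : ℤ) :
    Φ m n * F m n * Θ m n = -(α m n + β m n + γ m n + δ m n) := by
  have hG := gauge_coeff_right hP hα hγ hδ m n
  have hH := gauge_coeff_up hP hβ hγ hδ m n
  rw [alpha_succ_left hα, gamma_succ_left hγ] at hG
  rw [beta_succ_right hβ, delta_succ_right hδ] at hH
  linear_combination hG + hH - Φ m n * hΘ m n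

end GaugeCoefficients

theorem gauge_to_elementary_transformable_general
    (A B C G H F Θ Φ P α β γ δ : ℤ → ℤ → ℝ)
    (hΘ : SixPointScheme A B C G H F Θ)
    (hP : PEquations A B C G H Θ Φ P)
    (hα : ∀ m n : ℤ, α m n = A (m-1) n * Φ (m-1) n * Θ (m+1) n)
    (hβ : ∀ m n : ℤ, β m n = B m (n-1) * Φ m (n-1) * Θ m (n+1))
    (hγ : ∀ m n : ℤ, γ m n = (C (m-1) n - P (m-1) n) * Φ (m-1) n * Θ m (n+1))
    (hδ : ∀ m n : ℤ, δ m n = (C m (n-1) + P m (n-1)) * Φ m (n-1) * Θ (m+1) n) :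
    ∀ (X : ℤ → ℤ → ℝ) (m n : ℤ),
      Φ m n * (A m n * Θ (m+2) n * X (m+2) n + B m n * Θ m (n+2) * X m (n+2)
        + 2 * C m n * Θ (m+1) (n+1) * X (m+1) (n+1)
        + G m n * Θ (m+1) n * X (m+1) n + H m n * Θ m (n+1) * X m (n+1)
        - F m n * Θ m n * X m n) =
      α (m+1) n * X (m+2) n + β m (n+1) * X m (n+2)
        + (γ (m+1) n + δ m (n+1)) * X (m+1) (n+1)
        - (α (m+1) n + α m n + γ (m+1) n + δ m n) * X (m+1) n
        - (β m (n+1) + β m n + γ m n + δ m (n+1)) * X m (n+1)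
        + (α m n + β m n + γ m n + δ m n) * X m n := by
  intro X m n
  have hG := gauge_coeff_right hP hα hγ hδ m n
  have hH := gauge_coeff_up hP hβ hγ hδ m n
  have hF := gauge_coeff_center hΘ hP hα hβ hγ hδ m n
  rw [alpha_succ_left hα, gamma_succ_left hγ] at hG ⊢
  rw [beta_succ_right hβ, delta_succ_right hδ] at hH ⊢
  linear_combination X (m+1) n * hG + X m (n+1) * hH - X m n * hF

/-- the gauge transformation with data `Θ`, `Φ`, `P` brings the
6-point scheme to elementary transformable form. -/
theorem gauge_to_elementary_transformable
    (A B C G H F Θ Φ P α β γ δ : ℤ → ℤ → ℝ)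
    (hΘ : SixPointScheme A B C G H F Θ)
    (hΦ : AdjSixPointScheme A B C G H F Φ)
    (hP : PEquations A B C G H Θ Φ P)
    (hα : ∀ m n : ℤ, α m n = A (m-1) n * Φ (m-1) n * Θ (m+1) n)
    (hβ : ∀ m n : ℤ, β m n = B m (n-1) * Φ m (n-1) * Θ m (n+1))
    (hγ : ∀ m n : ℤ, γ m n = (C (m-1) n - P (m-1) n) * Φ (m-1) n * Θ m (n+1))
    (hδ : ∀ m n : ℤ, δ m n = (C m (n-1) + P m (n-1)) * Φ m (n-1) * Θ (m+1) n) :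
    ∀ (X : ℤ → ℤ → ℝ) (m n : ℤ),
      Φ m n * (A m n * Θ (m+2) n * X (m+2) n + B m n * Θ m (n+2) * X m (n+2)
        + 2 * C m n * Θ (m+1) (n+1) * X (m+1) (n+1)
        + G m n * Θ (m+1) n * X (m+1) n + H m n * Θ m (n+1) * X m (n+1)
        - F m n * Θ m n * X m n) =
      α (m+1) n * X (m+2) n + β m (n+1) * X m (n+2)
        + (γ (m+1) n + δ m (n+1)) * X (m+1) (n+1)
        - (α (m+1) n + α m n + γ (m+1) n + δ m n) * X (m+1) n
        - (β m (n+1) + β m n + γ m n + δ m (n+1)) * X m (n+1)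
        + (α m n + β m n + γ m n + δ m n) * X m n :=
  gauge_to_elementary_transformable_general A B C G H F Θ Φ P α β γ δ hΘ hP hα hβ hγ hδ
end

section
/- Let A, B, C, G, H, F, Θ, Φ : ℤ² → ℝ be lattice functions with Θ(m,n) ≠ 0 and Φ(m,n) ≠ 0 for all (m,n). Suppose there exist lattice functions α, β, γ, δ : ℤ² → ℝ such that for every lattice function X : ℤ² → ℝ and all (m,n) ∈ ℤ²: Φ(m,n)·[A(m,n)Θ(m+2,n)X(m+2,n) + B(m,n)Θ(m,n+2)X(m,n+2) + 2C(m,n)Θ(m+1,n+1)X(m+1,n+1) + G(m,n)Θ(m+1,n)X(m+1,n) + H(m,n)Θ(m,n+1)X(m,n+1) − F(m,n)Θ(m,n)X(m,n)] = α(m+1,n)X(m+2,n) + β(m,n+1)X(m,n+2) + (γ(m+1,n)+δ(m,n+1))X(m+1,n+1) − (α(m+1,n)+α(m,n)+γ(m+1,n)+δ(m,n))X(m+1,n) − (β(m,n+1)+β(m,n)+γ(m,n)+δ(m,n+1))X(m,n+1) + (α(m,n)+β(m,n)+γ(m,n)+δ(m,n))X(m,n). Then Θ satisfies the 6-point scheme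 with coefficients (A,B,C,G,H,F) and Φ satisfies the adjoint 6-point scheme. -/
/-!
Write `L` for the six-point operator and `E` for the elementary operator, so the hypothesis says
`Φ · L(Θ X) = E X`. `E` is in divergence form, hence kills constants; testing `X ≡ 1` gives
`Φ · LΘ = 0`. Dually, for the lattice delta `X = δ_(m,n)` the values of `E X` at the six points
whose stencil contains `(m,n)` telescope to zero, while the same sum on the left-hand side is
`Θ(m,n) · (L*Φ)(m,n)`.
-/

def sixPointOp (A B C G H F X : ℤ → ℤ → ℝ) (m n : ℤ) : ℝ :=
  A m n * X (m+2) n + B m n * X m (n+2) + 2 * C m n * X (m+1) (n+1)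
    + G m n * X (m+1) n + H m n * X m (n+1) - F m n * X m n

theorem sixPointOp_smul (A B C G H F X : ℤ → ℤ → ℝ) (c : ℝ) :
    sixPointOp A B C G H F (c • X) = c • sixPointOp A B C G H F X := by
  ext m n
  simp only [sixPointOp, Pi.smul_apply, smul_eq_mul]
  ring

theorem sixPointScheme_iff (A B C G H F Ψ : ℤ → ℤ → ℝ) :
    SixPointScheme A B C G H F Ψ ↔ ∀ m n, sixPointOp A B C G H F Ψ m n = 0 := by
  simp only [SixPointScheme, sixPointOp, sub_eq_zero]

def latticeDelta (m n : ℤ) : ℤ → ℤ → ℝ := fun p q => if p = m ∧ q = n then 1 else 0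

theorem latticeDelta_self (m n : ℤ) : latticeDelta m n m n = 1 := if_pos ⟨rfl, rfl⟩

theorem latticeDelta_of_ne {m n p q : ℤ} (h : p ≠ m ∨ q ≠ n) : latticeDelta m n p q = 0 :=
  if_neg (by tauto)

theorem mul_latticeDelta (Θ : ℤ → ℤ → ℝ) (m n : ℤ) :
    Θ * latticeDelta m n = Θ m n • latticeDelta m n := by
  ext p q
  by_cases h : p = m ∧ q = n
  · simp [h.1, h.2, latticeDelta_self]
  · simp [latticeDelta_of_ne (not_and_or.1 h)]

/-- The sum of `L` over the six lattice points whose six-point stencil contains `(m, n)`. -/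
def stencilSum (L : ℤ → ℤ → ℝ) (m n : ℤ) : ℝ :=
  L (m-2) n + L m (n-2) + L (m-1) (n-1) + L (m-1) n + L m (n-1) + L m n

theorem stencilSum_smul (c : ℝ) (L : ℤ → ℤ → ℝ) (m n : ℤ) :
    stencilSum (c • L) m n = c * stencilSum L m n := by
  simp only [stencilSum, Pi.smul_apply, smul_eq_mul]
  ring

theorem adjSixPointScheme_iff (A B C G H F Φ : ℤ → ℤ → ℝ) :
    AdjSixPointScheme A B C G H F Φ ↔
      ∀ m n, stencilSum (Φ * sixPointOp A B C G H F (latticeDelta m n)) m n = 0 := by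
  refine forall₂_congr fun m n => ?_
  rw [← sub_eq_zero]
  simp (disch := omega) only [stencilSum, sixPointOp, Pi.mul_apply, sub_add_cancel,
    latticeDelta_self, latticeDelta_of_ne]
  ring_nf

open fwdDiff

def fwdDiff₂ (X : ℤ → ℤ → ℝ) : ℤ → ℤ → ℝ := fun m => Δ_[1] (X m)

/-- The elementary transformable form, written in divergence form; `elementaryOp_apply` expands it
into the stencil of the informal statement. -/
def elementaryOp (α β γ δ X : ℤ → ℤ → ℝ) : ℤ → ℤ → ℝ :=
  Δ_[1] (α * Δ_[1] X) + fwdDiff₂ (β * fwdDiff₂ X) + Δ_[1] (γ * fwdDiff₂ X)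
    + fwdDiff₂ (δ * Δ_[1] X)

theorem elementaryOp_apply (α β γ δ X : ℤ → ℤ → ℝ) (m n : ℤ) :
    elementaryOp α β γ δ X m n =
      α (m+1) n * X (m+2) n + β m (n+1) * X m (n+2)
        + (γ (m+1) n + δ m (n+1)) * X (m+1) (n+1)
        - (α (m+1) n + α m n + γ (m+1) n + δ m n) * X (m+1) n
        - (β m (n+1) + β m n + γ m n + δ m (n+1)) * X m (n+1)
        + (α m n + β m n + γ m n + δ m n) * X m n := by
  simp only [elementaryOp, fwdDiff₂, fwdDiff, Pi.add_apply, Pi.sub_apply, Pi.mul_apply]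
  ring_nf

theorem elementaryOp_const (α β γ δ : ℤ → ℤ → ℝ) (c : ℝ) :
    elementaryOp α β γ δ (fun _ _ => c) = 0 := by
  ext m n
  simp [elementaryOp, fwdDiff₂, fwdDiff]

theorem stencilSum_elementaryOp_latticeDelta (α β γ δ : ℤ → ℤ → ℝ) (m n : ℤ) :
    stencilSum (elementaryOp α β γ δ (latticeDelta m n)) m n = 0 := by
  simp (disch := omega) only [stencilSum, elementaryOp_apply, sub_add_cancel, latticeDelta_self,
    latticeDelta_of_ne]
  ring_nf

/-- if the gauge transformation with data `Θ`, `Φ` brings the 6-point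
scheme to elementary transformable form, then `Θ` solves the scheme and `Φ` the
adjoint scheme. -/
theorem elementary_transformable_necessary
    (A B C G H F Θ Φ : ℤ → ℤ → ℝ)
    (hΘ0 : ∀ m n : ℤ, Θ m n ≠ 0) (hΦ0 : ∀ m n : ℤ, Φ m n ≠ 0)
    (h : ∃ α β γ δ : ℤ → ℤ → ℝ, ∀ (X : ℤ → ℤ → ℝ) (m n : ℤ),
      Φ m n * (A m n * Θ (m+2) n * X (m+2) n + B m n * Θ m (n+2) * X m (n+2)
        + 2 * C m n * Θ (m+1) (n+1) * X (m+1) (n+1)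
        + G m n * Θ (m+1) n * X (m+1) n + H m n * Θ m (n+1) * X m (n+1)
        - F m n * Θ m n * X m n) =
      α (m+1) n * X (m+2) n + β m (n+1) * X m (n+2)
        + (γ (m+1) n + δ m (n+1)) * X (m+1) (n+1)
        - (α (m+1) n + α m n + γ (m+1) n + δ m n) * X (m+1) n
        - (β m (n+1) + β m n + γ m n + δ m (n+1)) * X m (n+1)
        + (α m n + β m n + γ m n + δ m n) * X m n) :
    SixPointScheme A B C G H F Θ ∧ AdjSixPointScheme A B C G H F Φ := by
  obtain ⟨α, β, γ, δ, heq⟩ := h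
  have hgauge : ∀ X, Φ * sixPointOp A B C G H F (Θ * X) = elementaryOp α β γ δ X := by
    intro X
    ext m n
    simp only [elementaryOp_apply, sixPointOp, Pi.mul_apply]
    linear_combination heq X m n
  constructor
  · rw [sixPointScheme_iff]
    intro m n
    have hrow : Φ m n * sixPointOp A B C G H F Θ m n = 0 := by
      simpa only [mul_one, Pi.mul_apply, Pi.zero_apply] using
        (congrFun₂ (hgauge 1) m n).trans (congrFun₂ (elementaryOp_const α β γ δ 1) m n)
    exact (mul_eq_zero.1 hrow).resolve_left (hΦ0 m n)
  · rw [adjSixPointScheme_iff]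
    intro m n
    have hcol : Θ m n * stencilSum (Φ * sixPointOp A B C G H F (latticeDelta m n)) m n = 0 := by
      rw [← stencilSum_smul, ← mul_smul_comm, ← sixPointOp_smul, ← mul_latticeDelta, hgauge]
      exact stencilSum_elementaryOp_latticeDelta α β γ δ m n
    exact (mul_eq_zero.1 hcol).resolve_left (hΘ0 m n)
end

section
/- Let F, G, Θ : ℤ² → ℝ be lattice functions with F(m,n) ≠ 0 for all (m,n), and suppose Θ satisfies the discrete Moutard equation F(m,n)·(Θ(m+1,n+1) + Θ(m,n)) = G(m,n)·(Θ(m+1,n) + Θ(m,n+1)) for all (m,n) ∈ ℤ². Define Φ(m,n) := (Θ(m+1,n) + Θ(m,n+1))/F(m,n). Then Φ satisfies the adjoint discrete Moutard equation: F(m−1,n−1)Φ(m−1,n−1) + F(m,n)Φ(m,n) = G(m−1,n)Φ(m−1,n) + G(m,n−1)Φ(m,n−1) for all (m,n) ∈ ℤ². -/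
/-!
Both `F Φ` and `G Φ` are sums of `Θ` over a diagonal of an elementary square: `F Φ` over the
anti-diagonal by definition of `Φ`, and `G Φ` over the main diagonal by the Moutard equation.
Substituting, each side of the adjoint equation at `(m, n)` becomes the sum of `Θ` over the four
neighbours of `(m, n)`.
-/

section Moutard

variable {F G Θ Φ : ℤ → ℤ → ℝ} {m n : ℤ}

theorem mul_eq_antidiagonal_sum (hF : F m n ≠ 0)
    (hΦ : Φ m n = (Θ (m+1) n + Θ m (n+1)) / F m n) :
    F m n * Φ m n = Θ (m+1) n + Θ m (n+1) := by
  rw [hΦ, mul_div_cancel₀ _ hF]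

theorem mul_eq_diagonal_sum (hF : F m n ≠ 0)
    (hΘ : F m n * (Θ (m+1) (n+1) + Θ m n) = G m n * (Θ (m+1) n + Θ m (n+1)))
    (hΦ : Φ m n = (Θ (m+1) n + Θ m (n+1)) / F m n) :
    G m n * Φ m n = Θ (m+1) (n+1) + Θ m n := by
  rw [hΦ, mul_div_assoc', div_eq_iff hF, ← hΘ, mul_comm]

end Moutard

/-- if `Θ` solves the discrete Moutard equation, then
`Φ = (Θ(m+1,n)+Θ(m,n+1))/F` solves the adjoint discrete Moutard equation. -/
theorem adjoint_moutard_solution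
    (F G Θ : ℤ → ℤ → ℝ)
    (hF0 : ∀ m n : ℤ, F m n ≠ 0)
    (hΘ : ∀ m n : ℤ, F m n * (Θ (m+1) (n+1) + Θ m n) = G m n * (Θ (m+1) n + Θ m (n+1)))
    (Φ : ℤ → ℤ → ℝ)
    (hΦ : ∀ m n : ℤ, Φ m n = (Θ (m+1) n + Θ m (n+1)) / F m n) :
    ∀ m n : ℤ,
      F (m-1) (n-1) * Φ (m-1) (n-1) + F m n * Φ m n =
        G (m-1) n * Φ (m-1) n + G m (n-1) * Φ m (n-1) := by
  intro m n
  rw [mul_eq_antidiagonal_sum (hF0 _ _) (hΦ _ _), mul_eq_antidiagonal_sum (hF0 _ _) (hΦ _ _),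
    mul_eq_diagonal_sum (hF0 _ _) (hΘ _ _) (hΦ _ _), mul_eq_diagonal_sum (hF0 _ _) (hΘ _ _) (hΦ _ _)]
  simp only [sub_add_cancel]
  ring
end

section
/- Let F, G, Θ : ℤ² → ℝ be lattice functions with F(m,n) ≠ 0 and Θ(m+1,n) + Θ(m,n+1) ≠ 0 for all (m,n), and suppose Θ satisfies the discrete Moutard equation F(m,n)(Θ(m+1,n+1) + Θ(m,n)) = G(m,n)(Θ(m+1,n) + Θ(m,n+1)) for all (m,n). Define Φ(m,n) := (Θ(m+1,n) + Θ(m,n+1))/F(m,n) and P(m,n) := (Θ(m+1,n) − Θ(m,n+1))/(2Φ(m,n)). Then P satisfies the P-equations for the coefficients (A,B,C,G,H) = (0, 0, −F/2, G, G), Θ, Φ; explicitly, for all (m,n): Φ(m,n)Θ(m+1,n+1)P(m,n) − Φ(m−1,n)Θ(m,n+1)P(m−1,n) = −[−(F(m−1,n)/2)Φ(m−1,n)Θ(m,n+1) − (F(m,n)/2)Φ(m,n)Θ(m+1,n+1) + G(m,n)Φ(m,n)Θ(m,n+1)] and Φ(m,n)Θ(m+1,n+1)P(m,n) − Φ(m,n−1)Θ(m+1,n)P(m,n−1)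 = −(F(m,n−1)/2)Φ(m,n−1)Θ(m+1,n) − (F(m,n)/2)Φ(m,n)Θ(m+1,n+1) + G(m,n)Φ(m,n)Θ(m+1,n). -/
/-!
By construction `F Φ = Θ(m+1,n) + Θ(m,n+1)` and `2 Φ P = Θ(m+1,n) − Θ(m,n+1)`, so
`F Φ / 2 ± Φ P` recover `Θ(m+1,n)` and `Θ(m,n+1)`, while the Moutard equation says exactly
that `G Φ = Θ(m+1,n+1) + Θ(m,n)`. Substituting these into the P-equations, every `Φ`, `P`,
`F`, `G` disappears and both sides agree as polynomials in the values of `Θ`.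
-/

namespace DiscreteMoutard

variable {K : Type*} [Field K] {F G Θ Φ P : ℤ → ℤ → K}

theorem mul_eq_of_eq_div_of_moutard {f g φ s t : K} (hf : f ≠ 0) (hφ : φ = s / f)
    (hmoutard : f * t = g * s) : g * φ = t := by
  rw [hφ, mul_div_assoc', div_eq_iff hf]
  linear_combination -hmoutard

section PEquations

variable [CharZero K] (hFΦ : ∀ m n, Φ m n * F m n = Θ (m+1) n + Θ m (n+1))
  (hPΦ : ∀ m n, P m n * (2 * Φ m n) = Θ (m+1) n - Θ m (n+1))
  (hGΦ : ∀ m n, G m n * Φ m n = Θ (m+1) (n+1) + Θ m n)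
include hFΦ hPΦ hGΦ

theorem P_equation_m (m n : ℤ) :
    Φ m n * Θ (m+1) (n+1) * P m n - Φ (m-1) n * Θ m (n+1) * P (m-1) n =
      -(-(F (m-1) n / 2) * Φ (m-1) n * Θ m (n+1)
        - F m n / 2 * Φ m n * Θ (m+1) (n+1)
        + G m n * Φ m n * Θ m (n+1)) := by
  have hFΦ' := hFΦ (m-1) n
  have hPΦ' := hPΦ (m-1) n
  rw [sub_add_cancel] at hFΦ' hPΦ'
  linear_combination (Θ (m+1) (n+1) / 2) * hPΦ m n - (Θ m (n+1) / 2) * hPΦ'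
    - (Θ m (n+1) / 2) * hFΦ' - (Θ (m+1) (n+1) / 2) * hFΦ m n + Θ m (n+1) * hGΦ m n

theorem P_equation_n (m n : ℤ) :
    Φ m n * Θ (m+1) (n+1) * P m n - Φ m (n-1) * Θ (m+1) n * P m (n-1) =
      -(F m (n-1) / 2) * Φ m (n-1) * Θ (m+1) n
        - F m n / 2 * Φ m n * Θ (m+1) (n+1)
        + G m n * Φ m n * Θ (m+1) n := by
  have hFΦ' := hFΦ m (n-1)
  have hPΦ' := hPΦ m (n-1)
  rw [sub_add_cancel] at hFΦ' hPΦ'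
  linear_combination (Θ (m+1) (n+1) / 2) * hPΦ m n - (Θ (m+1) n / 2) * hPΦ'
    + (Θ (m+1) n / 2) * hFΦ' + (Θ (m+1) (n+1) / 2) * hFΦ m n - Θ (m+1) n * hGΦ m n

end PEquations

end DiscreteMoutard

/-- in the Moutard specification `(A,B,C,G,H) = (0,0,−F/2,G,G)` the
function `P = (Θ(m+1,n) − Θ(m,n+1))/(2Φ)` satisfies the P-equations. -/
theorem moutard_P_equations
    (F G Θ : ℤ → ℤ → ℝ)
    (hF0 : ∀ m n : ℤ, F m n ≠ 0)
    (hΘsum0 : ∀ m n : ℤ, Θ (m+1) n + Θ m (n+1) ≠ 0)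
    (hΘ : ∀ m n : ℤ, F m n * (Θ (m+1) (n+1) + Θ m n) = G m n * (Θ (m+1) n + Θ m (n+1)))
    (Φ P : ℤ → ℤ → ℝ)
    (hΦ : ∀ m n : ℤ, Φ m n = (Θ (m+1) n + Θ m (n+1)) / F m n)
    (hP : ∀ m n : ℤ, P m n = (Θ (m+1) n - Θ m (n+1)) / (2 * Φ m n)) :
    (∀ m n : ℤ,
      Φ m n * Θ (m+1) (n+1) * P m n - Φ (m-1) n * Θ m (n+1) * P (m-1) n =
        -(-(F (m-1) n / 2) * Φ (m-1) n * Θ m (n+1)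
          - F m n / 2 * Φ m n * Θ (m+1) (n+1)
          + G m n * Φ m n * Θ m (n+1))) ∧
    (∀ m n : ℤ,
      Φ m n * Θ (m+1) (n+1) * P m n - Φ m (n-1) * Θ (m+1) n * P m (n-1) =
        -(F m (n-1) / 2) * Φ m (n-1) * Θ (m+1) n
          - F m n / 2 * Φ m n * Θ (m+1) (n+1)
          + G m n * Φ m n * Θ (m+1) n) := by
  have hFΦ m n : Φ m n * F m n = Θ (m+1) n + Θ m (n+1) := (eq_div_iff (hF0 m n)).1 (hΦ m n)
  have hPΦ m n : P m n * (2 * Φ m n) = Θ (m+1) n - Θ m (n+1) := by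
    have hΦ0 : Φ m n ≠ 0 := hΦ m n ▸ div_ne_zero (hΘsum0 m n) (hF0 m n)
    exact (eq_div_iff (mul_ne_zero two_ne_zero hΦ0)).1 (hP m n)
  have hGΦ m n : G m n * Φ m n = Θ (m+1) (n+1) + Θ m n :=
    DiscreteMoutard.mul_eq_of_eq_div_of_moutard (hF0 m n) (hΦ m n) (hΘ m n)
  exact ⟨DiscreteMoutard.P_equation_m hFΦ hPΦ hGΦ,
    DiscreteMoutard.P_equation_n hFΦ hPΦ hGΦ⟩
end

section
/- Let 𝒜, ℬ, 𝒞, ℱ, Θ, N, N̄ : ℤ² → ℝ be lattice functions such that: Θ(m,n) ≠ 0 for all (m,n); the function 𝒫(m,n) := Θ(m,n)𝒜(m,n)ℬ(m,n) + Θ(m−1,n)𝒞(m,n)𝒜(m,n) + Θ(m,n−1)𝒞(m,n)ℬ(m,n) is nowhere zero; Θ and N both satisfy the self-adjoint 7-point scheme with coefficients (𝒜,ℬ,𝒞,ℱ); and for all (m,n): Θ(m+1,n)N̄(m+1,n) − Θ(m,n)N̄(m,n) = 𝒞(m,n)Θ(m−1,n)Θ(m,n−1)·(N(m−1,n)/Θ(m−1,n)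 − N(m,n)/Θ(m,n)) − Θ(m,n−1)(ℬ(m,n)Θ(m,n) + 𝒞(m,n)Θ(m−1,n))·(N(m,n−1)/Θ(m,n−1) − N(m,n)/Θ(m,n)) and Θ(m,n+1)N̄(m,n+1) − Θ(m,n)N̄(m,n) = Θ(m−1,n)(𝒜(m,n)Θ(m,n) + 𝒞(m,n)Θ(m,n−1))·(N(m−1,n)/Θ(m−1,n) − N(m,n)/Θ(m,n)) − 𝒞(m,n)Θ(m−1,n)Θ(m,n−1)·(N(m,n−1)/Θ(m,n−1) − N(m,n)/Θ(m,n)). Then N̄ satisfies the self-adjoint 7-point scheme with coefficients (Ā,B̄,C̄,F̄) given by: Ā(m+1,n) = Θ(m,n)Θ(m+1,n)𝒜(m,n)/(Θ(m,n−1)𝒫(m,n)); B̄(m,n+1) = Θ(m,n)Θ(m,n+1)ℬ(m,n)/(Θ(m−1,n)𝒫(m,n)); C̄(m,n) = 𝒞(m−1,n−1)Θ(m−1,n)Θ(m,n−1)/(Θ(m−1,n−1)𝒫(m−1,n−1)); F̄(m,n) = Θ(m,n)·(Ā(m+1,n)/Θ(m+1,n) + Ā(m,n)/Θ(m−1,n)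 + B̄(m,n+1)/Θ(m,n+1) + B̄(m,n)/Θ(m,n−1) + C̄(m+1,n)/Θ(m+1,n−1) + C̄(m,n+1)/Θ(m−1,n+1)). -/
/-!
Put `M := Θ N̄` and `ψ := N / Θ`. Because `F̄` is chosen so that `1 / Θ` solves the new scheme,
the new scheme for `N̄` at `(m,n)` says that the differences `M(k) - M(m,n)` to the six
neighbours `k`, weighted by `c̄_k / Θ(k)`, sum to zero. The hypotheses on `N̄` give the differences
of `M` along the edges of each cell through the differences of `ψ`. Grouping the six terms by the
three cells with origins `(m,n)`, `(m-1,n)`, `(m,n-1)`, the factor `𝒫` in the new coefficients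
cancels exactly, each cell contributes `Θ(m,n)` times a difference of two values of `ψ`, and the
three contributions telescope to zero.
-/

/-- A function `N` satisfies the self-adjoint 7-point scheme with coefficients
`(A,B,C,F)`. -/
def SevenPointScheme (A B C F N : ℤ → ℤ → ℝ) : Prop :=
  ∀ m n : ℤ,
    A (m+1) n * N (m+1) n + A m n * N (m-1) n
      + B m (n+1) * N m (n+1) + B m n * N m (n-1)
      + C (m+1) n * N (m+1) (n-1) + C m (n+1) * N (m-1) (n+1) = F m n * N m n

theorem SevenPointScheme.of_weighted_differences {A B C F Θ N : ℤ → ℤ → ℝ}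
    (hΘ : ∀ m n, Θ m n ≠ 0)
    (hF : ∀ m n, F m n = Θ m n *
      (A (m+1) n / Θ (m+1) n + A m n / Θ (m-1) n
        + B m (n+1) / Θ m (n+1) + B m n / Θ m (n-1)
        + C (m+1) n / Θ (m+1) (n-1) + C m (n+1) / Θ (m-1) (n+1)))
    (h : ∀ m n,
      A (m+1) n / Θ (m+1) n * (Θ (m+1) n * N (m+1) n - Θ m n * N m n)
        + A m n / Θ (m-1) n * (Θ (m-1) n * N (m-1) n - Θ m n * N m n)
        + B m (n+1) / Θ m (n+1) * (Θ m (n+1) * N m (n+1) - Θ m n * N m n)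
        + B m n / Θ m (n-1) * (Θ m (n-1) * N m (n-1) - Θ m n * N m n)
        + C (m+1) n / Θ (m+1) (n-1) * (Θ (m+1) (n-1) * N (m+1) (n-1) - Θ m n * N m n)
        + C m (n+1) / Θ (m-1) (n+1) * (Θ (m-1) (n+1) * N (m-1) (n+1) - Θ m n * N m n)
        = 0) :
    SevenPointScheme A B C F N := by
  intro m n
  rw [hF]
  linear_combination (norm := (field_simp [hΘ]; ring)) h m n

section DarbouxCell

/- One cell with origin value `θ`, `θw`/`θs` at its west/south neighbours, `x`/`y` the differences
of `ψ` towards them and `X`/`Y` those of `M` along its east/north edges, as in `h1`/`h2`. The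
suffix names the corner of the cell at which the new scheme is checked. -/

variable {A B C P θ θw θs x y X Y : ℝ}

theorem darboux_cell_origin (hP : P = θ * A * B + θw * C * A + θs * C * B) (hP0 : P ≠ 0)
    (hθw : θw ≠ 0) (hθs : θs ≠ 0)
    (hX : X = C * θw * θs * x - θs * (B * θ + C * θw) * y)
    (hY : Y = θw * (A * θ + C * θs) * x - C * θw * θs * y) :
    A / (θs * P) * X + B / (θw * P) * Y = x - y := by
  subst hX hY
  field_simp
  linear_combination (y - x) * hP

theorem darboux_cell_east (hP : P = θ * A * B + θw * C * A + θs * C * B) (hP0 : P ≠ 0)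
    (hθ : θ ≠ 0) (hθs : θs ≠ 0)
    (hX : X = C * θw * θs * x - θs * (B * θ + C * θw) * y)
    (hY : Y = θw * (A * θ + C * θs) * x - C * θw * θs * y) :
    -(A / (θs * P) * X) + C / (θ * P) * (Y - X) = y := by
  subst hX hY
  field_simp
  linear_combination (-θ * y) * hP

theorem darboux_cell_north (hP : P = θ * A * B + θw * C * A + θs * C * B) (hP0 : P ≠ 0)
    (hθ : θ ≠ 0) (hθw : θw ≠ 0)
    (hX : X = C * θw * θs * x - θs * (B * θ + C * θw) * y)
    (hY : Y = θw * (A * θ + C * θs) * x - C * θw * θs * y) :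
    -(B / (θw * P) * Y) + C / (θ * P) * (X - Y) = -x := by
  subst hX hY
  field_simp
  linear_combination θ * x * hP

end DarbouxCell

theorem darboux_seven_point_general
    (A B C Θ N Nb P Ab Bb Cb Fb : ℤ → ℤ → ℝ)
    (hΘ0 : ∀ m n : ℤ, Θ m n ≠ 0)
    (hP : ∀ m n : ℤ, P m n =
      Θ m n * A m n * B m n + Θ (m-1) n * C m n * A m n + Θ m (n-1) * C m n * B m n)
    (hP0 : ∀ m n : ℤ, P m n ≠ 0)
    (h1 : ∀ m n : ℤ,
      Θ (m+1) n * Nb (m+1) n - Θ m n * Nb m n =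
        C m n * Θ (m-1) n * Θ m (n-1) * (N (m-1) n / Θ (m-1) n - N m n / Θ m n)
        - Θ m (n-1) * (B m n * Θ m n + C m n * Θ (m-1) n)
          * (N m (n-1) / Θ m (n-1) - N m n / Θ m n))
    (h2 : ∀ m n : ℤ,
      Θ m (n+1) * Nb m (n+1) - Θ m n * Nb m n =
        Θ (m-1) n * (A m n * Θ m n + C m n * Θ m (n-1))
          * (N (m-1) n / Θ (m-1) n - N m n / Θ m n)
        - C m n * Θ (m-1) n * Θ m (n-1) * (N m (n-1) / Θ m (n-1) - N m n / Θ m n))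
    (hAb : ∀ m n : ℤ, Ab (m+1) n = Θ m n * Θ (m+1) n * A m n / (Θ m (n-1) * P m n))
    (hBb : ∀ m n : ℤ, Bb m (n+1) = Θ m n * Θ m (n+1) * B m n / (Θ (m-1) n * P m n))
    (hCb : ∀ m n : ℤ, Cb m n =
      C (m-1) (n-1) * Θ (m-1) n * Θ m (n-1) / (Θ (m-1) (n-1) * P (m-1) (n-1)))
    (hFb : ∀ m n : ℤ, Fb m n = Θ m n *
      (Ab (m+1) n / Θ (m+1) n + Ab m n / Θ (m-1) n
        + Bb m (n+1) / Θ m (n+1) + Bb m n / Θ m (n-1)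
        + Cb (m+1) n / Θ (m+1) (n-1) + Cb m (n+1) / Θ (m-1) (n+1))) :
    SevenPointScheme Ab Bb Cb Fb Nb := by
  have hAb' : ∀ m n, Ab m n = Θ (m-1) n * Θ m n * A (m-1) n / (Θ (m-1) (n-1) * P (m-1) n) :=
    fun m n => by simpa using hAb (m-1) n
  have hBb' : ∀ m n, Bb m n = Θ m (n-1) * Θ m n * B m (n-1) / (Θ (m-1) (n-1) * P m (n-1)) :=
    fun m n => by simpa using hBb m (n-1)
  refine SevenPointScheme.of_weighted_differences hΘ0 hFb fun m n => ?_
  have origin := darboux_cell_origin (hP m n) (hP0 m n) (hΘ0 _ _) (hΘ0 _ _) (h1 m n) (h2 m n)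
  have east := darboux_cell_east (hP (m-1) n) (hP0 (m-1) n) (hΘ0 _ _) (hΘ0 _ _)
    (h1 (m-1) n) (h2 (m-1) n)
  have north := darboux_cell_north (hP m (n-1)) (hP0 m (n-1)) (hΘ0 _ _) (hΘ0 _ _)
    (h1 m (n-1)) (h2 m (n-1))
  simp only [sub_add_cancel] at east north
  rw [hAb, hAb', hBb, hBb', hCb, hCb]
  simp only [add_sub_cancel_right]
  linear_combination (norm := (field_simp [hΘ0]; ring)) Θ m n * (origin + east + north)

/-- Darboux transformation for the self-adjoint 7-point scheme. -/
theorem darboux_seven_point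
    (A B C F Θ N Nb P Ab Bb Cb Fb : ℤ → ℤ → ℝ)
    (hΘ0 : ∀ m n : ℤ, Θ m n ≠ 0)
    (hP : ∀ m n : ℤ, P m n =
      Θ m n * A m n * B m n + Θ (m-1) n * C m n * A m n + Θ m (n-1) * C m n * B m n)
    (hP0 : ∀ m n : ℤ, P m n ≠ 0)
    (hΘ : SevenPointScheme A B C F Θ)
    (hN : SevenPointScheme A B C F N)
    (h1 : ∀ m n : ℤ,
      Θ (m+1) n * Nb (m+1) n - Θ m n * Nb m n =
        C m n * Θ (m-1) n * Θ m (n-1) * (N (m-1) n / Θ (m-1) n - N m n / Θ m n)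
        - Θ m (n-1) * (B m n * Θ m n + C m n * Θ (m-1) n)
          * (N m (n-1) / Θ m (n-1) - N m n / Θ m n))
    (h2 : ∀ m n : ℤ,
      Θ m (n+1) * Nb m (n+1) - Θ m n * Nb m n =
        Θ (m-1) n * (A m n * Θ m n + C m n * Θ m (n-1))
          * (N (m-1) n / Θ (m-1) n - N m n / Θ m n)
        - C m n * Θ (m-1) n * Θ m (n-1) * (N m (n-1) / Θ m (n-1) - N m n / Θ m n))
    (hAb : ∀ m n : ℤ, Ab (m+1) n = Θ m n * Θ (m+1) n * A m n / (Θ m (n-1) * P m n))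
    (hBb : ∀ m n : ℤ, Bb m (n+1) = Θ m n * Θ m (n+1) * B m n / (Θ (m-1) n * P m n))
    (hCb : ∀ m n : ℤ, Cb m n =
      C (m-1) (n-1) * Θ (m-1) n * Θ m (n-1) / (Θ (m-1) (n-1) * P (m-1) (n-1)))
    (hFb : ∀ m n : ℤ, Fb m n = Θ m n *
      (Ab (m+1) n / Θ (m+1) n + Ab m n / Θ (m-1) n
        + Bb m (n+1) / Θ m (n+1) + Bb m n / Θ m (n-1)
        + Cb (m+1) n / Θ (m+1) (n-1) + Cb m (n+1) / Θ (m-1) (n+1))) :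
    SevenPointScheme Ab Bb Cb Fb Nb :=
  darboux_seven_point_general A B C Θ N Nb P Ab Bb Cb Fb hΘ0 hP hP0 h1 h2 hAb hBb hCb hFb
end

section
/- Let 𝒜, ℬ, 𝒞, ℱ, Ψ : ℤ² → ℝ be lattice functions, and define N(m,n) := Ψ(m+1,n) + Ψ(m,n+1). Then for all (m,n) ∈ ℤ² the following identity holds: 𝒜(m+1,n)N(m+1,n) + 𝒜(m,n)N(m−1,n) + ℬ(m,n+1)N(m,n+1) + ℬ(m,n)N(m,n−1) + 𝒞(m+1,n)N(m+1,n−1) + 𝒞(m,n+1)N(m−1,n+1) − ℱ(m,n)N(m,n) = (𝒜(m,n)+ℬ(m,n))Ψ(m,n) + (𝒜(m+1,n)+ℬ(m,n+1))Ψ(m+1,n+1) + 𝒜(m,n)Ψ(m−1,n+1) + ℬ(m,n)Ψ(m+1,n−1) + 𝒜(m+1,n)Ψ(m+2,n) + ℬ(m,n+1)Ψ(m,n+2) + 𝒞(m+1,n)Ψ(m+2,n−1) + 𝒞(m,n+1)Ψ(m−1,n+2) + (𝒞(m+1,n)−ℱ(m,n))Ψ(m+1,n) + (𝒞(m,n+1)−ℱ(m,n))Ψ(m,n+1).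 In particular, Ψ satisfies the 10-point scheme with coefficients (𝒜,ℬ,𝒞,ℱ) if and only if N satisfies the self-adjoint 7-point scheme with coefficients (𝒜,ℬ,𝒞,ℱ). -/
/-- A function `Ψ` satisfies the 10-point scheme with coefficients `(A,B,C,F)`. -/
def TenPointScheme (A B C F Ψ : ℤ → ℤ → ℝ) : Prop :=
  ∀ m n : ℤ,
    (A m n + B m n) * Ψ m n + (A (m+1) n + B m (n+1)) * Ψ (m+1) (n+1)
      + A m n * Ψ (m-1) (n+1) + B m n * Ψ (m+1) (n-1)
      + A (m+1) n * Ψ (m+2) n + B m (n+1) * Ψ m (n+2)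
      + C (m+1) n * Ψ (m+2) (n-1) + C m (n+1) * Ψ (m-1) (n+2)
      + (C (m+1) n - F m n) * Ψ (m+1) n + (C m (n+1) - F m n) * Ψ m (n+1) = 0

section Residuals

variable (A B C F : ℤ → ℤ → ℝ)

def sevenPointResidual (N : ℤ → ℤ → ℝ) (m n : ℤ) : ℝ :=
  A (m+1) n * N (m+1) n + A m n * N (m-1) n
    + B m (n+1) * N m (n+1) + B m n * N m (n-1)
    + C (m+1) n * N (m+1) (n-1) + C m (n+1) * N (m-1) (n+1) - F m n * N m n

def tenPointResidual (Ψ : ℤ → ℤ → ℝ) (m n : ℤ) : ℝ :=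
  (A m n + B m n) * Ψ m n + (A (m+1) n + B m (n+1)) * Ψ (m+1) (n+1)
    + A m n * Ψ (m-1) (n+1) + B m n * Ψ (m+1) (n-1)
    + A (m+1) n * Ψ (m+2) n + B m (n+1) * Ψ m (n+2)
    + C (m+1) n * Ψ (m+2) (n-1) + C m (n+1) * Ψ (m-1) (n+2)
    + (C (m+1) n - F m n) * Ψ (m+1) n + (C m (n+1) - F m n) * Ψ m (n+1)

theorem sevenPointScheme_iff_residual_eq_zero (N : ℤ → ℤ → ℝ) :
    SevenPointScheme A B C F N ↔ ∀ m n, sevenPointResidual A B C F N m n = 0 := by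
  simp only [SevenPointScheme, sevenPointResidual, sub_eq_zero]

theorem tenPointScheme_iff_residual_eq_zero (Ψ : ℤ → ℤ → ℝ) :
    TenPointScheme A B C F Ψ ↔ ∀ m n, tenPointResidual A B C F Ψ m n = 0 :=
  Iff.rfl

variable {A B C F}

theorem sevenPointResidual_eq_tenPointResidual {Ψ N : ℤ → ℤ → ℝ}
    (hN : ∀ m n, N m n = Ψ (m+1) n + Ψ m (n+1)) (m n : ℤ) :
    sevenPointResidual A B C F N m n = tenPointResidual A B C F Ψ m n := by
  simp only [sevenPointResidual, tenPointResidual, hN, sub_add_cancel, add_assoc,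
    one_add_one_eq_two]
  ring

end Residuals

/-- substituting `N = Ψ(m+1,n) + Ψ(m,n+1)` into the self-adjoint
7-point scheme yields the 10-point scheme. -/
theorem seven_point_ten_point_identity
    (A B C F Ψ N : ℤ → ℤ → ℝ)
    (hN : ∀ m n : ℤ, N m n = Ψ (m+1) n + Ψ m (n+1)) :
    (∀ m n : ℤ,
      A (m+1) n * N (m+1) n + A m n * N (m-1) n
        + B m (n+1) * N m (n+1) + B m n * N m (n-1)
        + C (m+1) n * N (m+1) (n-1) + C m (n+1) * N (m-1) (n+1) - F m n * N m n =
      (A m n + B m n) * Ψ m n + (A (m+1) n + B m (n+1)) * Ψ (m+1) (n+1)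
        + A m n * Ψ (m-1) (n+1) + B m n * Ψ (m+1) (n-1)
        + A (m+1) n * Ψ (m+2) n + B m (n+1) * Ψ m (n+2)
        + C (m+1) n * Ψ (m+2) (n-1) + C m (n+1) * Ψ (m-1) (n+2)
        + (C (m+1) n - F m n) * Ψ (m+1) n + (C m (n+1) - F m n) * Ψ m (n+1)) ∧
    (TenPointScheme A B C F Ψ ↔ SevenPointScheme A B C F N) := by
  refine ⟨sevenPointResidual_eq_tenPointResidual hN, ?_⟩
  simp only [tenPointScheme_iff_residual_eq_zero, sevenPointScheme_iff_residual_eq_zero,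
    sevenPointResidual_eq_tenPointResidual hN]
end

section
/- Let 𝒜, ℬ, 𝒞, ℱ, Θ : ℤ² → ℝ be lattice functions such that Θ satisfies the 10-point scheme with coefficients (𝒜,ℬ,𝒞,ℱ). Define Φ(m,n) := Θ(m+1,n) + Θ(m,n+1). Then Φ satisfies the formally adjoint 10-point equation: for all (m,n) ∈ ℤ², (𝒜(m,n)+ℬ(m,n))Φ(m,n) + (𝒜(m,n−1)+ℬ(m−1,n))Φ(m−1,n−1) + 𝒜(m+1,n−1)Φ(m+1,n−1) + ℬ(m−1,n+1)Φ(m−1,n+1) + 𝒜(m−1,n)Φ(m−2,n) + ℬ(m,n−1)Φ(m,n−2) + 𝒞(m−1,n+1)Φ(m−2,n+1) + 𝒞(m+1,n−1)Φ(m+1,n−2) + (𝒞(m,n)−ℱ(m−1,n))Φ(m−1,n) + (𝒞(m,n)−ℱ(m,n−1))Φ(m,n−1) = 0. -/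
section TenPointOperator

variable {R : Type*} [CommRing R]

def tenPointOp (A B C F Ψ : ℤ → ℤ → R) (m n : ℤ) : R :=
  (A m n + B m n) * Ψ m n + (A (m+1) n + B m (n+1)) * Ψ (m+1) (n+1)
    + A m n * Ψ (m-1) (n+1) + B m n * Ψ (m+1) (n-1)
    + A (m+1) n * Ψ (m+2) n + B m (n+1) * Ψ m (n+2)
    + C (m+1) n * Ψ (m+2) (n-1) + C m (n+1) * Ψ (m-1) (n+2)
    + (C (m+1) n - F m n) * Ψ (m+1) n + (C m (n+1) - F m n) * Ψ m (n+1)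

def adjointTenPointOp (A B C F Φ : ℤ → ℤ → R) (m n : ℤ) : R :=
  (A m n + B m n) * Φ m n + (A m (n-1) + B (m-1) n) * Φ (m-1) (n-1)
    + A (m+1) (n-1) * Φ (m+1) (n-1) + B (m-1) (n+1) * Φ (m-1) (n+1)
    + A (m-1) n * Φ (m-2) n + B m (n-1) * Φ m (n-2)
    + C (m-1) (n+1) * Φ (m-2) (n+1) + C (m+1) (n-1) * Φ (m+1) (n-2)
    + (C m n - F (m-1) n) * Φ (m-1) n + (C m n - F m (n-1)) * Φ m (n-1)

theorem adjointTenPointOp_shift_add_shift (A B C F Θ : ℤ → ℤ → R) (m n : ℤ) :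
    adjointTenPointOp A B C F (fun m n => Θ (m+1) n + Θ m (n+1)) m n
      = tenPointOp A B C F Θ (m-1) n + tenPointOp A B C F Θ m (n-1) := by
  simp only [adjointTenPointOp, tenPointOp]
  ring_nf

end TenPointOperator

theorem tenPointScheme_iff (A B C F Ψ : ℤ → ℤ → ℝ) :
    TenPointScheme A B C F Ψ ↔ ∀ m n, tenPointOp A B C F Ψ m n = 0 :=
  Iff.rfl

/-- if `Θ` solves the 10-point scheme, then
`Φ = Θ(m+1,n) + Θ(m,n+1)` solves the formally adjoint 10-point equation. -/
theorem adjoint_ten_point_solution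
    (A B C F Θ Φ : ℤ → ℤ → ℝ)
    (hΘ : TenPointScheme A B C F Θ)
    (hΦ : ∀ m n : ℤ, Φ m n = Θ (m+1) n + Θ m (n+1)) :
    ∀ m n : ℤ,
      (A m n + B m n) * Φ m n + (A m (n-1) + B (m-1) n) * Φ (m-1) (n-1)
        + A (m+1) (n-1) * Φ (m+1) (n-1) + B (m-1) (n+1) * Φ (m-1) (n+1)
        + A (m-1) n * Φ (m-2) n + B m (n-1) * Φ m (n-2)
        + C (m-1) (n+1) * Φ (m-2) (n+1) + C (m+1) (n-1) * Φ (m+1) (n-2)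
        + (C m n - F (m-1) n) * Φ (m-1) n + (C m n - F m (n-1)) * Φ m (n-1) = 0 := by
  intro m n
  obtain rfl : Φ = fun m n => Θ (m+1) n + Θ m (n+1) := funext fun m => funext (hΦ m)
  have hL := (tenPointScheme_iff A B C F Θ).1 hΘ
  calc adjointTenPointOp A B C F (fun m n => Θ (m+1) n + Θ m (n+1)) m n
      = tenPointOp A B C F Θ (m-1) n + tenPointOp A B C F Θ m (n-1) :=
        adjointTenPointOp_shift_add_shift A B C F Θ m n
    _ = 0 := by rw [hL, hL, add_zero]
end

section
/- Let 𝒜, ℬ, 𝒞, ℱ, Θ, Ψ, Ψ̄ : ℤ² → ℝ be lattice functions. Define ϑ(m,n) := Θ(m+1,n) + Θ(m,n+1), N(m,n) := Ψ(m+1,n) + Ψ(m,n+1), N̄(m,n) := Ψ̄(m+1,n) + Ψ̄(m,n+1). Assume: Θ and Ψ satisfy the 10-point scheme with coefficients (𝒜,ℬ,𝒞,ℱ); ϑ(m,n) ≠ 0 for all (m,n); the function 𝒫(m,n) := ϑ(m,n)𝒜(m,n)ℬ(m,n) + ϑ(m−1,n)𝒞(m,n)𝒜(m,n) + ϑ(m,n−1)𝒞(m,n)ℬ(m,n)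 is nowhere zero; and for all (m,n): ϑ(m+1,n)N̄(m+1,n) − ϑ(m,n)N̄(m,n) = 𝒞(m,n)ϑ(m−1,n)ϑ(m,n−1)·(N(m−1,n)/ϑ(m−1,n) − N(m,n)/ϑ(m,n)) − ϑ(m,n−1)(ℬ(m,n)ϑ(m,n) + 𝒞(m,n)ϑ(m−1,n))·(N(m,n−1)/ϑ(m,n−1) − N(m,n)/ϑ(m,n)) and ϑ(m,n+1)N̄(m,n+1) − ϑ(m,n)N̄(m,n) = ϑ(m−1,n)(𝒜(m,n)ϑ(m,n) + 𝒞(m,n)ϑ(m,n−1))·(N(m−1,n)/ϑ(m−1,n) − N(m,n)/ϑ(m,n)) − 𝒞(m,n)ϑ(m−1,n)ϑ(m,n−1)·(N(m,n−1)/ϑ(m,n−1) − N(m,n)/ϑ(m,n)). Then N̄ satisfies the self-adjoint 7-point scheme with coefficients (Ā,B̄,C̄,F̄) given by: Ā(m+1,n) = ϑ(m,n)ϑ(m+1,n)𝒜(m,n)/(ϑ(m,n−1)𝒫(m,n)); B̄(m,n+1) = ϑ(m,n)ϑ(m,n+1)ℬ(m,n)/(ϑ(m−1,n)𝒫(m,n));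 C̄(m,n) = 𝒞(m−1,n−1)ϑ(m−1,n)ϑ(m,n−1)/(ϑ(m−1,n−1)𝒫(m−1,n−1)); F̄(m,n) = ϑ(m,n)·(Ā(m+1,n)/ϑ(m+1,n) + Ā(m,n)/ϑ(m−1,n) + B̄(m,n+1)/ϑ(m,n+1) + B̄(m,n)/ϑ(m,n−1) + C̄(m+1,n)/ϑ(m+1,n−1) + C̄(m,n+1)/ϑ(m−1,n+1)). -/
noncomputable section

namespace SevenPointScheme

def coeffSum (A B C : ℤ → ℤ → ℝ) (m n : ℤ) : ℝ :=
  A (m+1) n + A m n + B m (n+1) + B m n + C (m+1) n + C m (n+1)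

def gaugeA (ϑ A : ℤ → ℤ → ℝ) (m n : ℤ) : ℝ := ϑ (m-1) n * ϑ m n * A m n

def gaugeB (ϑ B : ℤ → ℤ → ℝ) (m n : ℤ) : ℝ := ϑ m (n-1) * ϑ m n * B m n

def gaugeC (ϑ C : ℤ → ℤ → ℝ) (m n : ℤ) : ℝ := ϑ (m-1) n * ϑ m (n-1) * C m n

def gaugeF (ϑ A B C : ℤ → ℤ → ℝ) (m n : ℤ) : ℝ :=
  ϑ m n * (A (m+1) n / ϑ (m+1) n + A m n / ϑ (m-1) n
    + B m (n+1) / ϑ m (n+1) + B m n / ϑ m (n-1)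
    + C (m+1) n / ϑ (m+1) (n-1) + C m (n+1) / ϑ (m-1) (n+1))

theorem gauge {A B C ϑ N : ℤ → ℤ → ℝ} (hϑ0 : ∀ m n, ϑ m n ≠ 0)
    (h : SevenPointScheme A B C (coeffSum A B C) fun m n => ϑ m n * N m n) :
    SevenPointScheme (gaugeA ϑ A) (gaugeB ϑ B) (gaugeC ϑ C)
      (gaugeF ϑ (gaugeA ϑ A) (gaugeB ϑ B) (gaugeC ϑ C)) N := by
  intro m n
  have := h m n
  simp only [coeffSum, gaugeA, gaugeB, gaugeC, gaugeF, add_sub_cancel_right] at this ⊢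
  field_simp [hϑ0]
  linear_combination this

end SevenPointScheme

section Moutard

variable {A B C ϑ N : ℤ → ℤ → ℝ}

def moutardDenom (A B C ϑ : ℤ → ℤ → ℝ) (m n : ℤ) : ℝ :=
  ϑ m n * A m n * B m n + ϑ (m-1) n * C m n * A m n + ϑ m (n-1) * C m n * B m n

def moutardIncr₁ (B C ϑ N : ℤ → ℤ → ℝ) (m n : ℤ) : ℝ :=
  C m n * ϑ (m-1) n * ϑ m (n-1) * (N (m-1) n / ϑ (m-1) n - N m n / ϑ m n)
    - ϑ m (n-1) * (B m n * ϑ m n + C m n * ϑ (m-1) n)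
      * (N m (n-1) / ϑ m (n-1) - N m n / ϑ m n)

def moutardIncr₂ (A C ϑ N : ℤ → ℤ → ℝ) (m n : ℤ) : ℝ :=
  ϑ (m-1) n * (A m n * ϑ m n + C m n * ϑ m (n-1))
      * (N (m-1) n / ϑ (m-1) n - N m n / ϑ m n)
    - C m n * ϑ (m-1) n * ϑ m (n-1) * (N m (n-1) / ϑ m (n-1) - N m n / ϑ m n)

def moutardWeightA (A B C ϑ : ℤ → ℤ → ℝ) (m n : ℤ) : ℝ :=
  A m n / (ϑ m (n-1) * moutardDenom A B C ϑ m n)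

def moutardWeightB (A B C ϑ : ℤ → ℤ → ℝ) (m n : ℤ) : ℝ :=
  B m n / (ϑ (m-1) n * moutardDenom A B C ϑ m n)

def moutardWeightC (A B C ϑ : ℤ → ℤ → ℝ) (m n : ℤ) : ℝ :=
  C m n / (ϑ m n * moutardDenom A B C ϑ m n)

theorem moutardWeight_incr_add (hϑ0 : ∀ m n, ϑ m n ≠ 0)
    (hP0 : ∀ m n, moutardDenom A B C ϑ m n ≠ 0) (m n : ℤ) :
    moutardWeightA A B C ϑ m n * moutardIncr₁ B C ϑ N m n
        + moutardWeightB A B C ϑ m n * moutardIncr₂ A C ϑ N m n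
      = N (m-1) n / ϑ (m-1) n - N m (n-1) / ϑ m (n-1) := by
  have := hP0 m n
  simp only [moutardWeightA, moutardWeightB, moutardIncr₁, moutardIncr₂]
  field_simp [hϑ0]
  unfold moutardDenom
  ring

theorem moutardWeight_incr_sub (hϑ0 : ∀ m n, ϑ m n ≠ 0)
    (hP0 : ∀ m n, moutardDenom A B C ϑ m n ≠ 0) (m n : ℤ) :
    moutardWeightC A B C ϑ m n * (moutardIncr₂ A C ϑ N m n - moutardIncr₁ B C ϑ N m n)
        - moutardWeightA A B C ϑ m n * moutardIncr₁ B C ϑ N m n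
      = N m (n-1) / ϑ m (n-1) - N m n / ϑ m n := by
  have := hP0 m n
  simp only [moutardWeightA, moutardWeightC, moutardIncr₁, moutardIncr₂]
  field_simp [hϑ0]
  unfold moutardDenom
  ring

theorem sevenPointScheme_moutardWeight (hϑ0 : ∀ m n, ϑ m n ≠ 0)
    (hP0 : ∀ m n, moutardDenom A B C ϑ m n ≠ 0) {M : ℤ → ℤ → ℝ}
    (h1 : ∀ m n, M (m+1) n - M m n = moutardIncr₁ B C ϑ N m n)
    (h2 : ∀ m n, M m (n+1) - M m n = moutardIncr₂ A C ϑ N m n) :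
    let a := fun m n => moutardWeightA A B C ϑ (m-1) n
    let b := fun m n => moutardWeightB A B C ϑ m (n-1)
    let c := fun m n => moutardWeightC A B C ϑ (m-1) (n-1)
    SevenPointScheme a b c (SevenPointScheme.coeffSum a b c) M := by
  intro a b c m n
  have h1' (m n : ℤ) : M m n - M (m-1) n = moutardIncr₁ B C ϑ N (m-1) n := by
    simpa only [sub_add_cancel] using h1 (m-1) n
  have h2' (m n : ℤ) : M m n - M m (n-1) = moutardIncr₂ A C ϑ N m (n-1) := by
    simpa only [sub_add_cancel] using h2 m (n-1)
  simp only [a, b, c, SevenPointScheme.coeffSum, add_sub_cancel_right]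
  -- the triangles at `(m,n)`, `(m-1,n)` and `(m,n-1)`
  linear_combination
    moutardWeightA A B C ϑ m n * h1 m n - moutardWeightA A B C ϑ (m-1) n * h1' m n
      + moutardWeightB A B C ϑ m n * h2 m n - moutardWeightB A B C ϑ m (n-1) * h2' m n
      + moutardWeightC A B C ϑ m (n-1) * (h1 m (n-1) - h2' m n)
      + moutardWeightC A B C ϑ (m-1) n * (h2 (m-1) n - h1' m n)
      + moutardWeight_incr_add (N := N) hϑ0 hP0 m n
      + moutardWeight_incr_sub (N := N) hϑ0 hP0 (m-1) n
      - moutardWeight_incr_add (N := N) hϑ0 hP0 m (n-1)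
      - moutardWeight_incr_sub (N := N) hϑ0 hP0 m (n-1)

end Moutard

end

theorem darboux_ten_point_general
    (A B C ϑ N Nb P Ab Bb Cb Fb : ℤ → ℤ → ℝ)
    (hϑ0 : ∀ m n : ℤ, ϑ m n ≠ 0)
    (hP : ∀ m n : ℤ, P m n =
      ϑ m n * A m n * B m n + ϑ (m-1) n * C m n * A m n + ϑ m (n-1) * C m n * B m n)
    (hP0 : ∀ m n : ℤ, P m n ≠ 0)
    (h1 : ∀ m n : ℤ,
      ϑ (m+1) n * Nb (m+1) n - ϑ m n * Nb m n =
        C m n * ϑ (m-1) n * ϑ m (n-1) * (N (m-1) n / ϑ (m-1) n - N m n / ϑ m n)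
        - ϑ m (n-1) * (B m n * ϑ m n + C m n * ϑ (m-1) n)
          * (N m (n-1) / ϑ m (n-1) - N m n / ϑ m n))
    (h2 : ∀ m n : ℤ,
      ϑ m (n+1) * Nb m (n+1) - ϑ m n * Nb m n =
        ϑ (m-1) n * (A m n * ϑ m n + C m n * ϑ m (n-1))
          * (N (m-1) n / ϑ (m-1) n - N m n / ϑ m n)
        - C m n * ϑ (m-1) n * ϑ m (n-1) * (N m (n-1) / ϑ m (n-1) - N m n / ϑ m n))
    (hAb : ∀ m n : ℤ, Ab (m+1) n = ϑ m n * ϑ (m+1) n * A m n / (ϑ m (n-1) * P m n))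
    (hBb : ∀ m n : ℤ, Bb m (n+1) = ϑ m n * ϑ m (n+1) * B m n / (ϑ (m-1) n * P m n))
    (hCb : ∀ m n : ℤ, Cb m n =
      C (m-1) (n-1) * ϑ (m-1) n * ϑ m (n-1) / (ϑ (m-1) (n-1) * P (m-1) (n-1)))
    (hFb : ∀ m n : ℤ, Fb m n = ϑ m n *
      (Ab (m+1) n / ϑ (m+1) n + Ab m n / ϑ (m-1) n
        + Bb m (n+1) / ϑ m (n+1) + Bb m n / ϑ m (n-1)
        + Cb (m+1) n / ϑ (m+1) (n-1) + Cb m (n+1) / ϑ (m-1) (n+1))) :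
    SevenPointScheme Ab Bb Cb Fb Nb := by
  obtain rfl : P = moutardDenom A B C ϑ := funext₂ hP
  obtain rfl : Ab = SevenPointScheme.gaugeA ϑ fun m n => moutardWeightA A B C ϑ (m-1) n :=
    funext₂ fun m n => by
      simpa only [SevenPointScheme.gaugeA, moutardWeightA, sub_add_cancel, mul_div_assoc]
        using hAb (m-1) n
  obtain rfl : Bb = SevenPointScheme.gaugeB ϑ fun m n => moutardWeightB A B C ϑ m (n-1) :=
    funext₂ fun m n => by
      simpa only [SevenPointScheme.gaugeB, moutardWeightB, sub_add_cancel, mul_div_assoc]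
        using hBb m (n-1)
  obtain rfl : Cb = SevenPointScheme.gaugeC ϑ fun m n => moutardWeightC A B C ϑ (m-1) (n-1) :=
    funext₂ fun m n => by
      rw [hCb, SevenPointScheme.gaugeC, moutardWeightC]
      ring
  obtain rfl : Fb = SevenPointScheme.gaugeF ϑ _ _ _ := funext₂ hFb
  exact (sevenPointScheme_moutardWeight hϑ0 hP0 h1 h2).gauge hϑ0

/-- discrete Moutard type transformation built on the 10-point
scheme. -/
theorem darboux_ten_point
    (A B C F Θ Ψ Ψb ϑ N Nb P Ab Bb Cb Fb : ℤ → ℤ → ℝ)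
    (hϑ : ∀ m n : ℤ, ϑ m n = Θ (m+1) n + Θ m (n+1))
    (hNdef : ∀ m n : ℤ, N m n = Ψ (m+1) n + Ψ m (n+1))
    (hNbdef : ∀ m n : ℤ, Nb m n = Ψb (m+1) n + Ψb m (n+1))
    (hΘ : TenPointScheme A B C F Θ)
    (hΨ : TenPointScheme A B C F Ψ)
    (hϑ0 : ∀ m n : ℤ, ϑ m n ≠ 0)
    (hP : ∀ m n : ℤ, P m n =
      ϑ m n * A m n * B m n + ϑ (m-1) n * C m n * A m n + ϑ m (n-1) * C m n * B m n)
    (hP0 : ∀ m n : ℤ, P m n ≠ 0)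
    (h1 : ∀ m n : ℤ,
      ϑ (m+1) n * Nb (m+1) n - ϑ m n * Nb m n =
        C m n * ϑ (m-1) n * ϑ m (n-1) * (N (m-1) n / ϑ (m-1) n - N m n / ϑ m n)
        - ϑ m (n-1) * (B m n * ϑ m n + C m n * ϑ (m-1) n)
          * (N m (n-1) / ϑ m (n-1) - N m n / ϑ m n))
    (h2 : ∀ m n : ℤ,
      ϑ m (n+1) * Nb m (n+1) - ϑ m n * Nb m n =
        ϑ (m-1) n * (A m n * ϑ m n + C m n * ϑ m (n-1))
          * (N (m-1) n / ϑ (m-1) n - N m n / ϑ m n)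
        - C m n * ϑ (m-1) n * ϑ m (n-1) * (N m (n-1) / ϑ m (n-1) - N m n / ϑ m n))
    (hAb : ∀ m n : ℤ, Ab (m+1) n = ϑ m n * ϑ (m+1) n * A m n / (ϑ m (n-1) * P m n))
    (hBb : ∀ m n : ℤ, Bb m (n+1) = ϑ m n * ϑ m (n+1) * B m n / (ϑ (m-1) n * P m n))
    (hCb : ∀ m n : ℤ, Cb m n =
      C (m-1) (n-1) * ϑ (m-1) n * ϑ m (n-1) / (ϑ (m-1) (n-1) * P (m-1) (n-1)))
    (hFb : ∀ m n : ℤ, Fb m n = ϑ m n *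
      (Ab (m+1) n / ϑ (m+1) n + Ab m n / ϑ (m-1) n
        + Bb m (n+1) / ϑ m (n+1) + Bb m n / ϑ m (n-1)
        + Cb (m+1) n / ϑ (m+1) (n-1) + Cb m (n+1) / ϑ (m-1) (n+1))) :
    SevenPointScheme Ab Bb Cb Fb Nb :=
  darboux_ten_point_general A B C ϑ N Nb P Ab Bb Cb Fb hϑ0 hP hP0 h1 h2 hAb hBb hCb hFb
end

section
/- Let α, β, γ, δ : ℝ² → ℝ be C¹ functions with γ(x,y)δ(x,y) − α(x,y)β(x,y) ≠ 0 for all (x,y) ∈ ℝ², let ψ : ℝ² → ℝ be C², and let ψ̄ : ℝ² → ℝ be C² with ψ̄_x = δψ_x + βψ_y and ψ̄_y = −αψ_x − γψ_y on all of ℝ². Define ᾱ := α/(γδ−αβ), β̄ := β/(γδ−αβ), γ̄ := δ/(γδ−αβ), δ̄ := γ/(γδ−αβ). Then ψ̄ satisfies on ℝ² the equation ᾱ ψ̄_xx + β̄ ψ̄_yy + (γ̄ + δ̄) ψ̄_xy + (ᾱ_x + δ̄_y) ψ̄_x + (β̄_y + γ̄_x) ψ̄_y = 0. -/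
/-- Partial derivative with respect to the first variable. -/
noncomputable def px (f : ℝ × ℝ → ℝ) : ℝ × ℝ → ℝ :=
  fun p => fderiv ℝ f p (1, 0)

/-- Partial derivative with respect to the second variable. -/
noncomputable def py (f : ℝ × ℝ → ℝ) : ℝ × ℝ → ℝ :=
  fun p => fderiv ℝ f p (0, 1)

/-!
Inverting the transformation gives `ᾱ ψ̄_x + γ̄ ψ̄_y = -ψ_y` and `δ̄ ψ̄_x + β̄ ψ̄_y = ψ_x`. The
operator `ℒ̄` is in divergence form, `ℒ̄ u = ∂_x (ᾱ u_x + γ̄ u_y) + ∂_y (δ̄ u_x + β̄ u_y)`, so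
`ℒ̄ ψ̄ = -ψ_yx + ψ_xy`, which vanishes by the symmetry of second derivatives.
-/

lemma fderiv_fderiv_apply {E F : Type*} [NormedAddCommGroup E] [NormedSpace ℝ E]
    [NormedAddCommGroup F] [NormedSpace ℝ F] {f : E → F} {p : E}
    (hf : DifferentiableAt ℝ (fderiv ℝ f) p) (v w : E) :
    fderiv ℝ (fun q => fderiv ℝ f q v) p w = fderiv ℝ (fderiv ℝ f) p w v := by
  rw [fderiv_clm_apply hf (differentiableAt_const v)]
  simp

section PartialDerivatives

variable {f g : ℝ × ℝ → ℝ} {p : ℝ × ℝ}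

lemma px_add (hf : DifferentiableAt ℝ f p) (hg : DifferentiableAt ℝ g p) :
    px (fun q => f q + g q) p = px f p + px g p := by
  simp [px, fderiv_fun_add hf hg]

lemma py_add (hf : DifferentiableAt ℝ f p) (hg : DifferentiableAt ℝ g p) :
    py (fun q => f q + g q) p = py f p + py g p := by
  simp [py, fderiv_fun_add hf hg]

lemma px_mul (hf : DifferentiableAt ℝ f p) (hg : DifferentiableAt ℝ g p) :
    px (fun q => f q * g q) p = f p * px g p + px f p * g p := by
  simp [px, fderiv_fun_mul hf hg, mul_comm]

lemma py_mul (hf : DifferentiableAt ℝ f p) (hg : DifferentiableAt ℝ g p) :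
    py (fun q => f q * g q) p = f p * py g p + py f p * g p := by
  simp [py, fderiv_fun_mul hf hg, mul_comm]

lemma px_neg : px (fun q => -f q) p = -px f p := by
  simp [px, fderiv_fun_neg]

lemma differentiableAt_px (hf : ContDiffAt ℝ 2 f p) : DifferentiableAt ℝ (px f) p :=
  ((hf.fderiv_right le_rfl).differentiableAt one_ne_zero).clm_apply (differentiableAt_const _)

lemma differentiableAt_py (hf : ContDiffAt ℝ 2 f p) : DifferentiableAt ℝ (py f) p :=
  ((hf.fderiv_right le_rfl).differentiableAt one_ne_zero).clm_apply (differentiableAt_const _)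

lemma px_py_comm (hf : ContDiffAt ℝ 2 f p) : px (py f) p = py (px f) p := by
  have hf' := (hf.fderiv_right (m := 1) le_rfl).differentiableAt one_ne_zero
  change fderiv ℝ (fun q => fderiv ℝ f q (0, 1)) p (1, 0)
    = fderiv ℝ (fun q => fderiv ℝ f q (1, 0)) p (0, 1)
  rw [fderiv_fderiv_apply hf', fderiv_fderiv_apply hf']
  exact hf.isSymmSndFDerivAt (le_of_eq minSmoothness_of_isRCLikeNormedField) _ _

end PartialDerivatives

noncomputable def elementaryOperator (a b c d u : ℝ × ℝ → ℝ) (p : ℝ × ℝ) : ℝ :=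
  a p * px (px u) p + b p * py (py u) p + (c p + d p) * px (py u) p
    + (px a p + py d p) * px u p + (py b p + px c p) * py u p

theorem elementaryOperator_eq_px_add_py {a b c d u : ℝ × ℝ → ℝ} {p : ℝ × ℝ}
    (ha : DifferentiableAt ℝ a p) (hb : DifferentiableAt ℝ b p)
    (hc : DifferentiableAt ℝ c p) (hd : DifferentiableAt ℝ d p) (hu : ContDiffAt ℝ 2 u p) :
    elementaryOperator a b c d u p =
      px (fun q => a q * px u q + c q * py u q) p + py (fun q => d q * px u q + b q * py u q) p := by
  have hux := differentiableAt_px hu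
  have huy := differentiableAt_py hu
  rw [px_add (ha.fun_mul hux) (hc.fun_mul huy), py_add (hd.fun_mul hux) (hb.fun_mul huy), px_mul ha hux,
    px_mul hc huy, py_mul hd hux, py_mul hb huy, elementaryOperator, px_py_comm hu]
  ring

/-- the transformed function `ψ̄` satisfies the elementary
transformable equation with the bared coefficients. -/
theorem transformed_elementary_transformable_eq
    (α β γ δ ψ ψb : ℝ × ℝ → ℝ)
    (hα : ContDiff ℝ 1 α) (hβ : ContDiff ℝ 1 β)
    (hγ : ContDiff ℝ 1 γ) (hδ : ContDiff ℝ 1 δ)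
    (hdet : ∀ p : ℝ × ℝ, γ p * δ p - α p * β p ≠ 0)
    (hψ : ContDiff ℝ 2 ψ) (hψb : ContDiff ℝ 2 ψb)
    (hx : ∀ p : ℝ × ℝ, px ψb p = δ p * px ψ p + β p * py ψ p)
    (hy : ∀ p : ℝ × ℝ, py ψb p = - α p * px ψ p - γ p * py ψ p)
    (αb βb γb δb : ℝ × ℝ → ℝ)
    (hαb : ∀ p : ℝ × ℝ, αb p = α p / (γ p * δ p - α p * β p))
    (hβb : ∀ p : ℝ × ℝ, βb p = β p / (γ p * δ p - α p * β p))
    (hγb : ∀ p : ℝ × ℝ, γb p = δ p / (γ p * δ p - α p * β p))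
    (hδb : ∀ p : ℝ × ℝ, δb p = γ p / (γ p * δ p - α p * β p)) :
    ∀ p : ℝ × ℝ,
      αb p * px (px ψb) p + βb p * py (py ψb) p + (γb p + δb p) * px (py ψb) p
        + (px αb p + py δb p) * px ψb p + (py βb p + px γb p) * py ψb p = 0 := by
  have hbar {f fb : ℝ × ℝ → ℝ} (hf : ContDiff ℝ 1 f)
      (hfb : ∀ q, fb q = f q / (γ q * δ q - α q * β q)) : Differentiable ℝ fb := by
    rw [funext hfb]
    exact (hf.div ((hγ.mul hδ).sub (hα.mul hβ)) hdet).differentiable one_ne_zero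
  have hU : (fun q => αb q * px ψb q + γb q * py ψb q) = fun q => -py ψ q := by
    funext q
    rw [hαb, hγb, hx, hy]
    field_simp [hdet q]
    ring
  have hV : (fun q => δb q * px ψb q + βb q * py ψb q) = px ψ := by
    funext q
    rw [hδb, hβb, hx, hy]
    field_simp [hdet q]
    ring
  intro p
  calc elementaryOperator αb βb γb δb ψb p
      = px (fun q => αb q * px ψb q + γb q * py ψb q) p
          + py (fun q => δb q * px ψb q + βb q * py ψb q) p :=
        elementaryOperator_eq_px_add_py (hbar hα hαb p) (hbar hβ hβb p) (hbar hδ hγb p)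
          (hbar hγ hδb p) hψb.contDiffAt
    _ = -px (py ψ) p + py (px ψ) p := by rw [hU, hV, px_neg]
    _ = 0 := by rw [px_py_comm hψ.contDiffAt]; ring
end
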